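/- For the chain model S = ε_S, X = γS + ε_X, Y = αX + ε_Y (diagram S → X → Y), with independent centered errors of positive variances, the partial regression coefficient β_{YX·S} = σ_{XY·S}/σ²_{X·S} equals β_{YX} = σ_{XY}/σ²_X; in particular conditioning on S cannot reverse the sign of the regression coefficient (no Simpson's paradox). -/

import Mathlib

open MeasureTheory ProbabilityTheory

/-!
Writing Y = αX + ε_Y, the noise ε_Y is uncorrelated with both S and X, so by bilinearity
σ_{XY} = α σ²_X and σ_{SY} = α σ_{XS}. Hence σ_{XY·S} = α σ²_{X·S}, and both regression
coefficients equal the structural coefficient α.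
-/

/-- Covariance of two real random variables. -/
noncomputable def cov {Ω : Type*} [MeasurableSpace Ω] (μ : Measure Ω) (X Y : Ω → ℝ) : ℝ :=
  ∫ ω, X ω * Y ω ∂μ - (∫ ω, X ω ∂μ) * (∫ ω, Y ω ∂μ)

lemma cov_comm {Ω : Type*} [MeasurableSpace Ω] (μ : Measure Ω) (X Y : Ω → ℝ) :
    cov μ X Y = cov μ Y X := by
  simp only [cov, mul_comm]

section Covariance

variable {Ω : Type*} [MeasurableSpace Ω] {μ : Measure Ω} [IsProbabilityMeasure μ]
  {X Y Z : Ω → ℝ}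

lemma cov_eq_covariance (hX : MemLp X 2 μ) (hY : MemLp Y 2 μ) :
    cov μ X Y = covariance X Y μ := by
  rw [covariance_eq_sub hX hY]
  rfl

lemma cov_self_nonneg (hX : MemLp X 2 μ) : 0 ≤ cov μ X X := by
  rw [cov_eq_covariance hX hX, covariance_self hX.aemeasurable]
  exact variance_nonneg X μ

lemma cov_eq_zero_of_indepFun (h : IndepFun X Y μ) (hX : MemLp X 2 μ) (hY : MemLp Y 2 μ) :
    cov μ X Y = 0 := by
  rw [cov_eq_covariance hX hY, h.covariance_eq_zero hX hY]

lemma cov_const_mul_add_left (a : ℝ) (hX : MemLp X 2 μ) (hY : MemLp Y 2 μ)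
    (hZ : MemLp Z 2 μ) :
    cov μ (fun ω ↦ a * X ω + Y ω) Z = a * cov μ X Z + cov μ Y Z := by
  have haX : MemLp (fun ω ↦ a * X ω) 2 μ := hX.const_mul a
  rw [show (fun ω ↦ a * X ω + Y ω) = (fun ω ↦ a * X ω) + Y from rfl,
    cov_eq_covariance (haX.add hY) hZ, cov_eq_covariance hX hZ, cov_eq_covariance hY hZ,
    covariance_add_left haX hY hZ, covariance_const_mul_left]

lemma cov_const_mul_add_right (a : ℝ) (hX : MemLp X 2 μ) (hY : MemLp Y 2 μ)
    (hZ : MemLp Z 2 μ) :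
    cov μ Z (fun ω ↦ a * X ω + Y ω) = a * cov μ Z X + cov μ Z Y := by
  rw [cov_comm, cov_const_mul_add_left a hX hY hZ, cov_comm μ X, cov_comm μ Y]

end Covariance

lemma partial_regression_coeff_of_linear {a b c α : ℝ} (hpart : c - a ^ 2 / b ≠ 0) :
    (α * c - a * (α * a) / b) / (c - a ^ 2 / b) = α := by
  rw [show α * c - a * (α * a) / b = α * (c - a ^ 2 / b) by ring,
    mul_div_cancel_right₀ α hpart]

theorem regression_coeffs_eq_of_uncorrelated_noise {Ω : Type*} [MeasurableSpace Ω]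
    {μ : Measure Ω} [IsProbabilityMeasure μ] {S X Y ε : Ω → ℝ} {α : ℝ}
    (hS : MemLp S 2 μ) (hX : MemLp X 2 μ) (hε : MemLp ε 2 μ)
    (hY : Y = fun ω ↦ α * X ω + ε ω) (hSε : cov μ S ε = 0) (hXε : cov μ X ε = 0)
    (hpart : 0 < cov μ X X - (cov μ X S) ^ 2 / cov μ S S) :
    (cov μ X Y - cov μ X S * cov μ S Y / cov μ S S)
        / (cov μ X X - (cov μ X S) ^ 2 / cov μ S S) = α ∧
    cov μ X Y / cov μ X X = α := by
  have hXY : cov μ X Y = α * cov μ X X := by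
    rw [hY, cov_const_mul_add_right α hX hε hX, hXε, add_zero]
  have hSY : cov μ S Y = α * cov μ X S := by
    rw [hY, cov_const_mul_add_right α hX hε hS, hSε, add_zero, cov_comm μ S]
  have hXX : 0 < cov μ X X := by
    have : 0 ≤ cov μ X S ^ 2 / cov μ S S := div_nonneg (sq_nonneg _) (cov_self_nonneg hS)
    linarith
  refine ⟨?_, ?_⟩
  · rw [hXY, hSY]
    exact partial_regression_coeff_of_linear hpart.ne'
  · rw [hXY, mul_div_cancel_right₀ α hXX.ne']

theorem stmt8_general {Ω : Type*} [MeasurableSpace Ω] (μ : Measure Ω) [IsProbabilityMeasure μ]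
    (α γ : ℝ) (e : Fin 3 → Ω → ℝ) (S X Y : Ω → ℝ)
    (hindep : iIndepFun e μ)
    (hL2 : ∀ i, MemLp (e i) 2 μ)
    (hS : ∀ ω, S ω = e 0 ω)
    (hX : ∀ ω, X ω = γ * S ω + e 1 ω)
    (hY : ∀ ω, Y ω = α * X ω + e 2 ω)
    (hpart : 0 < cov μ X X - (cov μ X S) ^ 2 / cov μ S S) :
    (cov μ X Y - cov μ X S * cov μ S Y / cov μ S S)
        / (cov μ X X - (cov μ X S) ^ 2 / cov μ S S)
      = cov μ X Y / cov μ X X ∧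
    Real.sign ((cov μ X Y - cov μ X S * cov μ S Y / cov μ S S)
        / (cov μ X X - (cov μ X S) ^ 2 / cov μ S S))
      = Real.sign (cov μ X Y / cov μ X X) := by
  obtain rfl : S = e 0 := funext hS
  obtain rfl : X = fun ω ↦ γ * e 0 ω + e 1 ω := funext hX
  have hXL2 : MemLp (fun ω ↦ γ * e 0 ω + e 1 ω) 2 μ := ((hL2 0).const_mul γ).add (hL2 1)
  have huncorr : ∀ i j, i ≠ j → cov μ (e i) (e j) = 0 := fun i j hij ↦
    cov_eq_zero_of_indepFun (hindep.indepFun hij) (hL2 i) (hL2 j)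
  have hXε : cov μ (fun ω ↦ γ * e 0 ω + e 1 ω) (e 2) = 0 := by
    rw [cov_const_mul_add_left γ (hL2 0) (hL2 1) (hL2 2), huncorr 0 2 (by decide),
      huncorr 1 2 (by decide), mul_zero, add_zero]
  obtain ⟨hpartial, hmarginal⟩ := regression_coeffs_eq_of_uncorrelated_noise (hL2 0) hXL2
    (hL2 2) (funext hY) (huncorr 0 2 (by decide)) hXε hpart
  rw [hpartial, hmarginal]
  exact ⟨rfl, rfl⟩

/-- Collapsibility of the regression coefficient over S for the diagram S → X → Y:
β_{YX·S} = β_{YX}; in particular conditioning on S cannot reverse the sign of the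
regression coefficient (no Simpson's paradox). -/
theorem stmt8 {Ω : Type*} [MeasurableSpace Ω] (μ : Measure Ω) [IsProbabilityMeasure μ]
    (α γ : ℝ) (e : Fin 3 → Ω → ℝ) (S X Y : Ω → ℝ)
    (hmeas : ∀ i, Measurable (e i))
    (hindep : iIndepFun e μ)
    (hL2 : ∀ i, MemLp (e i) 2 μ)
    (hmean : ∀ i, ∫ ω, e i ω ∂μ = 0)
    (hvar : ∀ i, 0 < cov μ (e i) (e i))
    (hS : ∀ ω, S ω = e 0 ω)
    (hX : ∀ ω, X ω = γ * S ω + e 1 ω)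
    (hY : ∀ ω, Y ω = α * X ω + e 2 ω)
    (hpart : 0 < cov μ X X - (cov μ X S) ^ 2 / cov μ S S) :
    (cov μ X Y - cov μ X S * cov μ S Y / cov μ S S)
        / (cov μ X X - (cov μ X S) ^ 2 / cov μ S S)
      = cov μ X Y / cov μ X X ∧
    Real.sign ((cov μ X Y - cov μ X S * cov μ S Y / cov μ S S)
        / (cov μ X X - (cov μ X S) ^ 2 / cov μ S S))
      = Real.sign (cov μ X Y / cov μ X X) :=
  stmt8_general μ α γ e S X Y hindep hL2 hS hX hY hpart
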